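/- Let x ∈ X with T^{-1}(x) ∉ A and κ(x) ≥ 5 and such that T^n(x) is never the all-zero sequence. Then for every k ≥ 5, liminf_{N→∞} (1/N) Σ_{i=0}^{N-1} 1_{E_k}(T^i(x)) ≤ (k+2)/2^k, where E_k = ⋃_{i=k+1}^{∞} ⋃_{j=0}^{i-1} T^j([0^i]). -/

import Mathlib

open MeasureTheory Filter Topology
open scoped ENNReal

/-- The odometer map on `X = {0,1}^ℕ` (adding one with carry in binary). -/
def Tod (x : ℕ → Bool) : ℕ → Bool := fun k =>
  if ∀ i < k, x i = true then !(x k) else x k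

/-- The inverse of the odometer map (subtracting one with borrow). -/
def TodInv (x : ℕ → Bool) : ℕ → Bool := fun k =>
  if ∀ i < k, x i = false then !(x k) else x k

/-- The number determined by the first `k` binary digits of `x`. -/
def DN (k : ℕ) (x : ℕ → Bool) : ℕ := ∑ i ∈ Finset.range k, 2 ^ i * (x i).toNat

/-- The cylinder `[0^i]` of sequences starting with `i` zeros. -/
def cyl0 (i : ℕ) : Set (ℕ → Bool) := {x | ∀ j < i, x j = false}

/-- `A = ⋃_{i=5}^∞ ⋃_{j=0}^{i-1} T^j([0^i])`. -/
def Aset : Set (ℕ → Bool) := ⋃ (i : ℕ) (_ : 5 ≤ i) (j : ℕ) (_ : j < i), Tod^[j] '' cyl0 i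

/-- `A_k = ⋃_{i=5}^{k} ⋃_{j=0}^{i-1} T^j([0^i])`. -/
def Ak (k : ℕ) : Set (ℕ → Bool) :=
  ⋃ (i : ℕ) (_ : 5 ≤ i) (_ : i ≤ k) (j : ℕ) (_ : j < i), Tod^[j] '' cyl0 i

/-- `E_k = ⋃_{i=k+1}^∞ ⋃_{j=0}^{i-1} T^j([0^i])`. -/
def Ek (k : ℕ) : Set (ℕ → Bool) :=
  ⋃ (i : ℕ) (_ : k + 1 ≤ i) (j : ℕ) (_ : j < i), Tod^[j] '' cyl0 i

/-!
Write `DN i y` for the number encoded by the first `i` digits of `y`. The odometer adds one to it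
modulo `2 ^ i`, and `y ∈ E_k` exactly when `DN i y < i` for some `i > k`. Since `T⁻¹ x ∉ A`,
every `i ≥ 5` with `DN i x ≠ 0` has `DN i x > i`.

Because the orbit of `x` never reaches `0`, `x` has infinitely many zero digits; take such a digit
`L ≥ k` beyond the first one of `x`. For `n < 2 ^ L` and `i > L` the sum `DN i x + n` does not wrap
around modulo `2 ^ i`, so only the indices `i ∈ (k, L]` can put `T^n x` in `E_k`, and each of them
does so for `i` residues out of every `2 ^ i` consecutive `n`. Thus at most
`∑_{i=k+1}^{L} 2^{L-i} i ≤ (k + 2) 2^{L-k}` of the first `2 ^ L` points of the orbit lie in `E_k`.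
-/

open Finset

lemma DN_succ (i : ℕ) (y : ℕ → Bool) : DN (i + 1) y = DN i y + 2 ^ i * (y i).toNat := by
  simp [DN, sum_range_succ]

lemma DN_lt_two_pow (i : ℕ) (y : ℕ → Bool) : DN i y < 2 ^ i := by
  induction i with
  | zero => simp [DN]
  | succ i ih =>
    have : 2 ^ i * (y i).toNat ≤ 2 ^ i := mul_le_of_le_one_right' (Bool.toNat_le _)
    rw [DN_succ, pow_succ]
    omega

lemma DN_add_one_eq_two_pow {i : ℕ} {y : ℕ → Bool} (h : ∀ j < i, y j = true) :
    DN i y + 1 = 2 ^ i := by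
  induction i with
  | zero => simp [DN]
  | succ i ih =>
    rw [Nat.forall_lt_succ_right] at h
    have := ih h.1
    rw [DN_succ, h.2, Bool.toNat_true, mul_one, pow_succ]
    omega

lemma DN_add_two_pow_lt {i j : ℕ} {y : ℕ → Bool} (hj : j < i) (hy : y j = false) :
    DN i y + 2 ^ j < 2 ^ i := by
  induction i, hj using Nat.le_induction with
  | base =>
    have := DN_lt_two_pow j y
    rw [DN_succ, hy, Bool.toNat_false, mul_zero, add_zero, pow_succ]
    omega
  | succ i _ ih =>
    have : 2 ^ i * (y i).toNat ≤ 2 ^ i := mul_le_of_le_one_right' (Bool.toNat_le _)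
    rw [DN_succ, pow_succ]
    omega

lemma DN_eq_zero_iff {i : ℕ} {y : ℕ → Bool} : DN i y = 0 ↔ y ∈ cyl0 i := by
  simp [DN, cyl0, sum_eq_zero_iff]

lemma DN_pos {i j : ℕ} {y : ℕ → Bool} (hj : j < i) (hy : y j = true) : 0 < DN i y :=
  Nat.pos_of_ne_zero fun h => by simp [DN_eq_zero_iff.1 h j hj] at hy

lemma DN_Tod (i : ℕ) (y : ℕ → Bool) : DN i (Tod y) = (DN i y + 1) % 2 ^ i := by
  induction i with
  | zero => simp [DN]
  | succ i ih =>
    rw [DN_succ, DN_succ, ih]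
    by_cases h : ∀ j < i, y j = true
    · have hc := DN_add_one_eq_two_pow h
      have hT : Tod y i = !y i := if_pos h
      rw [hc, Nat.mod_self, hT, pow_succ]
      cases y i
      · simp only [Bool.not_false, Bool.toNat_true, Bool.toNat_false, mul_one, mul_zero,
          zero_add, add_zero, hc]
        rw [Nat.mod_eq_of_lt (by omega)]
      · simp only [Bool.not_true, Bool.toNat_true, Bool.toNat_false, mul_one, mul_zero,
          add_zero]
        rw [show DN i y + 2 ^ i + 1 = 2 ^ i * 2 by omega, Nat.mod_self]
    · obtain ⟨j, hj, hyj⟩ : ∃ j < i, y j = false := by simpa using h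
      have hlt := DN_add_two_pow_lt hj hyj
      have hT : Tod y i = y i := if_neg h
      have : 2 ^ i * (y i).toNat ≤ 2 ^ i := mul_le_of_le_one_right' (Bool.toNat_le _)
      have := Nat.one_le_two_pow (n := j)
      rw [hT, Nat.mod_eq_of_lt (by omega), Nat.mod_eq_of_lt (by rw [pow_succ]; omega)]
      ring

lemma DN_iterate_Tod (i n : ℕ) (y : ℕ → Bool) : DN i (Tod^[n] y) = (DN i y + n) % 2 ^ i := by
  induction n with
  | zero => simp [Nat.mod_eq_of_lt (DN_lt_two_pow i y)]
  | succ n ih => rw [Function.iterate_succ_apply', DN_Tod, ih, Nat.mod_add_mod, add_assoc]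

lemma forall_TodInv_eq_true_iff (x : ℕ → Bool) (k : ℕ) :
    (∀ i < k, TodInv x i = true) ↔ ∀ i < k, x i = false := by
  induction k with
  | zero => simp
  | succ k ih =>
    simp only [Nat.forall_lt_succ_right, ih]
    refine and_congr_right fun h => ?_
    rw [show TodInv x k = !x k from if_pos h]
    cases x k <;> simp

lemma rightInverse_TodInv : Function.RightInverse TodInv Tod := by
  intro x
  funext k
  unfold Tod
  by_cases h : ∀ i < k, x i = false
  · rw [if_pos ((forall_TodInv_eq_true_iff x k).2 h), TodInv, if_pos h, Bool.not_not]
  · rw [if_neg (mt (forall_TodInv_eq_true_iff x k).1 h), TodInv, if_neg h]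

lemma mem_iterate_image_cyl0_iff {i j : ℕ} (hj : j < 2 ^ i) (y : ℕ → Bool) :
    y ∈ Tod^[j] '' cyl0 i ↔ DN i y = j := by
  constructor
  · rintro ⟨z, hz, rfl⟩
    rw [DN_iterate_Tod, DN_eq_zero_iff.2 hz, zero_add, Nat.mod_eq_of_lt hj]
  · intro hy
    set z := TodInv^[j] y
    have hzy : Tod^[j] z = y := rightInverse_TodInv.iterate j y
    refine ⟨z, DN_eq_zero_iff.1 ?_, hzy⟩
    have h : DN i z + j ≡ 0 + j [MOD 2 ^ i] := by
      rw [Nat.ModEq, ← DN_iterate_Tod, hzy, hy, zero_add, Nat.mod_eq_of_lt hj]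
    simpa [Nat.ModEq, Nat.mod_eq_of_lt (DN_lt_two_pow i z)] using Nat.ModEq.add_right_cancel' j h

lemma mem_Ek_iff {k : ℕ} {y : ℕ → Bool} : y ∈ Ek k ↔ ∃ i, k + 1 ≤ i ∧ DN i y < i := by
  simp only [Ek, Set.mem_iUnion]
  constructor
  · rintro ⟨i, hi, j, hji, hy⟩
    rw [mem_iterate_image_cyl0_iff (hji.trans i.lt_two_pow_self)] at hy
    exact ⟨i, hi, hy ▸ hji⟩
  · rintro ⟨i, hi, hlt⟩
    exact ⟨i, hi, DN i y, hlt, (mem_iterate_image_cyl0_iff (hlt.trans i.lt_two_pow_self) y).2 rfl⟩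

lemma lt_DN_of_preimage_notMem_Aset {x : ℕ → Bool} (hpre : ∀ y, Tod y = x → y ∉ Aset)
    {i : ℕ} (hi : 5 ≤ i) (hx : 0 < DN i x) : i < DN i x := by
  have hy : ¬ DN i (TodInv x) < i := fun h =>
    hpre _ (rightInverse_TodInv x) (show TodInv x ∈ Ek 4 from mem_Ek_iff.2 ⟨i, hi, h⟩)
  have hTod := DN_Tod i (TodInv x)
  rw [rightInverse_TodInv x] at hTod
  have := DN_lt_two_pow i (TodInv x)
  rcases Nat.lt_or_ge (DN i (TodInv x) + 1) (2 ^ i) with h | h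
  · rw [Nat.mod_eq_of_lt h] at hTod
    omega
  · rw [show DN i (TodInv x) + 1 = 2 ^ i by omega, Nat.mod_self] at hTod
    omega

lemma exists_ge_eq_false {x : ℕ → Bool} (hnz : ∀ m, Tod^[m] x ≠ fun _ => false) (M : ℕ) :
    ∃ L ≥ M, x L = false := by
  by_contra! htrue
  simp only [ne_eq, Bool.not_eq_false] at htrue
  set m := 2 ^ M - DN M x
  have hcarry : ∀ r ≥ M, DN r x + m = 2 ^ r := by
    intro r hr
    induction r, hr using Nat.le_induction with
    | base => have := DN_lt_two_pow M x; omega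
    | succ r hr ih => rw [DN_succ, htrue r hr, Bool.toNat_true, mul_one, pow_succ]; omega
  refine hnz m (funext fun j => ?_)
  have hzero : DN (max (j + 1) M) (Tod^[m] x) = 0 := by
    rw [DN_iterate_Tod, hcarry _ (le_max_right _ _), Nat.mod_self]
  exact DN_eq_zero_iff.1 hzero j (by omega)

lemma card_filter_add_mod_lt_le (c P M i : ℕ) :
    #{n ∈ range (P * M) | (c + n) % P < i} ≤ M * i := by
  calc #{n ∈ range (P * M) | (c + n) % P < i}
      ≤ #(range M ×ˢ range i) := by
        refine card_le_card_of_injOn (fun n => (n / P, (c + n) % P)) ?_ ?_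
        · intro n hn
          simp only [coe_filter, mem_range] at hn
          simp [Nat.div_lt_of_lt_mul hn.1, hn.2]
        · intro n _ n' _ h
          simp only [Prod.mk.injEq] at h
          rw [← Nat.div_add_mod n P, ← Nat.div_add_mod n' P, h.1,
            Nat.ModEq.add_left_cancel' c h.2]
    _ = M * i := by simp

lemma sum_Icc_two_pow_mul_add (k d : ℕ) :
    ∑ i ∈ Icc (k + 1) (k + d), 2 ^ (k + d - i) * i + (k + d + 2) = (k + 2) * 2 ^ d := by
  induction d generalizing k with
  | zero => simp
  | succ d ih =>
    have := ih (k + 1)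
    rw [← insert_Icc_add_one_left_eq_Icc (by omega), sum_insert (by simp),
      show k + (d + 1) = k + 1 + d by ring, Nat.add_sub_cancel_left, pow_succ]
    linarith

lemma le_of_DN_add_mod_lt {x : ℕ → Bool} (hpre : ∀ y, Tod y = x → y ∉ Aset) {p L n i : ℕ}
    (hp : x p = true) (hL : x L = false) (hpL : p < L) (hn : n < 2 ^ L) (hi : 5 ≤ i)
    (h : (DN i x + n) % 2 ^ i < i) : i ≤ L := by
  by_contra! hLi
  have hx := lt_DN_of_preimage_notMem_Aset hpre hi (DN_pos (hpL.trans hLi) hp)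
  have := DN_add_two_pow_lt hLi hL
  rw [Nat.mod_eq_of_lt (by omega)] at h
  omega

lemma card_filter_iterate_mem_Ek_le {x : ℕ → Bool} (hpre : ∀ y, Tod y = x → y ∉ Aset)
    {p k d : ℕ} [DecidablePred (· ∈ Ek k)] (hk : 5 ≤ k) (hp : x p = true)
    (hL : x (k + d) = false) (hpL : p < k + d) :
    #{n ∈ range (2 ^ (k + d)) | Tod^[n] x ∈ Ek k} ≤ (k + 2) * 2 ^ d := by
  calc #{n ∈ range (2 ^ (k + d)) | Tod^[n] x ∈ Ek k}
      ≤ #((Icc (k + 1) (k + d)).biUnion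
          fun i => {n ∈ range (2 ^ (k + d)) | (DN i x + n) % 2 ^ i < i}) := by
        refine card_le_card fun n hn => ?_
        obtain ⟨hn, hmem⟩ := mem_filter.1 hn
        obtain ⟨i, hki, hi⟩ := mem_Ek_iff.1 hmem
        rw [DN_iterate_Tod] at hi
        have := le_of_DN_add_mod_lt hpre hp hL hpL (mem_range.1 hn) (by omega) hi
        exact mem_biUnion.2 ⟨i, mem_Icc.2 ⟨hki, this⟩, mem_filter.2 ⟨hn, hi⟩⟩
    _ ≤ ∑ i ∈ Icc (k + 1) (k + d), #{n ∈ range (2 ^ (k + d)) | (DN i x + n) % 2 ^ i < i} :=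
        card_biUnion_le
    _ ≤ ∑ i ∈ Icc (k + 1) (k + d), 2 ^ (k + d - i) * i := by
        refine sum_le_sum fun i hi => ?_
        rw [← Nat.add_sub_cancel' (mem_Icc.1 hi).2, pow_add, Nat.add_sub_cancel_left]
        exact card_filter_add_mod_lt_le _ _ _ _
    _ ≤ (k + 2) * 2 ^ d := by
        have := sum_Icc_two_pow_mul_add k d
        omega

theorem stmt8_general (x : ℕ → Bool)
    (hpre : ∀ y, Tod y = x → y ∉ Aset)
    (hnz : ∀ m, Tod^[m] x ≠ fun _ => false)
    (k : ℕ) (hk : 5 ≤ k) :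
    Filter.atTop.liminf
      (fun N : ℕ => (1 / (N : ℝ)) *
        ∑ i ∈ Finset.range N, (Ek k).indicator (fun _ => (1 : ℝ)) (Tod^[i] x)) ≤
      ((k : ℝ) + 2) / 2 ^ k := by
  classical
  simp only [Set.indicator_apply, sum_boole]
  obtain ⟨p, hp⟩ : ∃ p, x p = true := by
    by_contra! h
    exact hnz 0 (funext fun j => by simpa using h j)
  refine liminf_le_of_frequently_le (frequently_atTop.2 fun M => ?_)
    (isBoundedUnder_of ⟨0, fun N => by positivity⟩)
  obtain ⟨L, hL, hxL⟩ := exists_ge_eq_false hnz (M + p + k + 1)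
  obtain ⟨d, rfl⟩ : ∃ d, L = k + d := ⟨L - k, by omega⟩
  refine ⟨2 ^ (k + d), by have := (k + d).lt_two_pow_self; omega, ?_⟩
  have hcard : (#{n ∈ range (2 ^ (k + d)) | Tod^[n] x ∈ Ek k} : ℝ) ≤ (k + 2) * 2 ^ d := by
    exact_mod_cast card_filter_iterate_mem_Ek_le hpre hk hp hxL (by omega)
  calc 1 / ((2 ^ (k + d) : ℕ) : ℝ) * #{n ∈ range (2 ^ (k + d)) | Tod^[n] x ∈ Ek k}
      ≤ 1 / 2 ^ (k + d) * ((k + 2) * 2 ^ d) := by push_cast; gcongr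
    _ = (k + 2) / 2 ^ k := by field_simp; ring

/-- for `x` with `T^{-1}(x) ∉ A`, `κ(x) ≥ 5`, whose orbit avoids the all-zero
point, and every `k ≥ 5`: `liminf_N (1/N) Σ_{i<N} 1_{E_k}(T^i x) ≤ (k+2)/2^k`. -/
theorem stmt8 (x : ℕ → Bool)
    (hpre : ∀ y, Tod y = x → y ∉ Aset)
    (h5 : ∀ i < 5, x i = false)
    (hnz : ∀ m, Tod^[m] x ≠ fun _ => false)
    (k : ℕ) (hk : 5 ≤ k) :
    Filter.atTop.liminf
      (fun N : ℕ => (1 / (N : ℝ)) *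
        ∑ i ∈ Finset.range N, (Ek k).indicator (fun _ => (1 : ℝ)) (Tod^[i] x)) ≤
      ((k : ℝ) + 2) / 2 ^ k :=
  stmt8_general x hpre hnz k hk
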